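/- arXiv:0806.2122 — 2 statements merged into one kernel-verified Lean document; each statement's English description precedes it below -/
import Mathlib

section
/- Let (C^•, d) be a cochain complex of abelian groups with C^i = 0 for i < 0, and let φ, ψ : C^• → C^• be morphisms of cochain complexes satisfying ψ ∘ φ = id. Assume that the subcomplex K^• of C^• defined by K^i = ker(ψ : C^i → C^i) (which is stable under d since ψ is a chain map) is exact, i.e. H^i(K^•) = 0 for all i ≥ 0. Then for every i ≥ 0 the mapping cones of φ − id and of ψ − id have isomorphic cohomology: H^i(cone(φ − id)) ≅ H^i(cone(ψ − id)). Moreover, an isomorphism is realized as follows: a class in H^i(cone(ψ − id)) represented by a pair (x, y) ∈ C^{i−1} × C^i with dy = 0 and (ψ − 1)(y) = dx is sent to the class of (−φ(x) + z, y), where z ∈ K^{i−1} is any element with dz = (φψ − 1)(y) (such z exists because (φψ − 1)(y) is a cocycle of K^•); the inverse sends the class of a pair (u, v) with dv = 0 and (φ − 1)(v) = du to the class of (−ψ(u), v). -/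
section ConeComparison

variable (C : ℕ → Type*) [∀ n, AddCommGroup (C n)] (d : ∀ n, C n →+ C (n + 1))

/-- Cocycles in degree `0` of the mapping cone of `f − id` on a cochain complex `C^•`
concentrated in nonnegative degrees: since `C^{-1} = 0`, these are the `y ∈ C^0` with
`d y = 0` and `(f − 1) y = 0`. -/
def ConeCocycle₀ (f : ∀ n, C n →+ C n) : Type _ :=
  {y : C 0 // d 0 y = 0 ∧ f 0 y = y}

/-- Cocycles in degree `1` of the mapping cone of `f − id`: pairs
`(x, y) ∈ C^0 × C^1` with `d y = 0` and `(f − 1) y = d x`. -/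
def ConeCocycle₁ (f : ∀ n, C n →+ C n) : Type _ :=
  {p : C 0 × C 1 // d 1 p.2 = 0 ∧ f 1 p.2 - p.2 = d 0 p.1}

/-- The coboundary relation in degree `1` of the mapping cone of `f − id`:
`(x, y)` and `(x', y')` differ by the coboundary of an element `b ∈ C^0` of the cone
(since `C^{-1} = 0`). -/
def ConeBoundaryRel₁ (f : ∀ n, C n →+ C n) :
    ConeCocycle₁ C d f → ConeCocycle₁ C d f → Prop := fun p q =>
  ∃ b : C 0, p.1.1 = q.1.1 + (f 0 b - b) ∧ p.1.2 = q.1.2 + d 0 b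

/-- Degree-`1` cohomology of the mapping cone of `f − id`. -/
def ConeCohomology₁ (f : ∀ n, C n →+ C n) : Type _ :=
  Quot (ConeBoundaryRel₁ C d f)

/-- Cocycles in degree `n + 2` of the mapping cone of `f − id`: pairs
`(x, y) ∈ C^{n+1} × C^{n+2}` with `d y = 0` and `(f − 1) y = d x`. -/
def ConeCocycle (f : ∀ n, C n →+ C n) (n : ℕ) : Type _ :=
  {p : C (n + 1) × C (n + 2) // d (n + 2) p.2 = 0 ∧ f (n + 2) p.2 - p.2 = d (n + 1) p.1}

/-- The coboundary relation in degree `n + 2` of the mapping cone of `f − id`: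
two cocycles differ by the coboundary of an element `(a, b) ∈ C^n × C^{n+1}`. -/
def ConeBoundaryRel (f : ∀ n, C n →+ C n) (n : ℕ) :
    ConeCocycle C d f n → ConeCocycle C d f n → Prop := fun p q =>
  ∃ (a : C n) (b : C (n + 1)),
    p.1.1 = q.1.1 + (f (n + 1) b - b + d n a) ∧ p.1.2 = q.1.2 + d (n + 1) b

/-- Degree-`n + 2` cohomology of the mapping cone of `f − id`. -/
def ConeCohomology (f : ∀ n, C n →+ C n) (n : ℕ) : Type _ :=
  Quot (ConeBoundaryRel C d f n)

/-- Auxiliary bundle of hypotheses for the cone comparison. -/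
structure ConeAuxData (φ ψ : ∀ n, C n →+ C n) : Prop where
  hφ : ∀ n (x : C n), d n (φ n x) = φ (n + 1) (d n x)
  hψ : ∀ n (x : C n), d n (ψ n x) = ψ (n + 1) (d n x)
  hψφ : ∀ n (x : C n), ψ n (φ n x) = x
  hK₀ : ∀ y : C 0, ψ 0 y = 0 → d 0 y = 0 → y = 0
  hK : ∀ n (y : C (n + 1)), ψ (n + 1) y = 0 → d (n + 1) y = 0 →
    ∃ z : C n, ψ n z = 0 ∧ d n z = y

namespace ConeAuxData

variable {C} {d} {φ ψ : ∀ n, C n →+ C n}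

theorem zex (h : ConeAuxData C d φ ψ) (m : ℕ) (y : C (m + 1)) (hy : d (m + 1) y = 0) :
    ∃ z : C m, ψ m z = 0 ∧ d m z = φ (m + 1) (ψ (m + 1) y) - y := by
  refine h.hK m _ ?_ ?_
  · rw [map_sub, h.hψφ, sub_self]
  · rw [map_sub, h.hφ, h.hψ, hy, map_zero, map_zero, sub_zero]

/-- A choice of `z ∈ K` with `d z = (φψ − 1) y`, for `y` a cocycle. -/
noncomputable def Z (h : ConeAuxData C d φ ψ) (m : ℕ) (y : C (m + 1))
    (hy : d (m + 1) y = 0) : C m :=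
  (h.zex m y hy).choose

theorem Zψ (h : ConeAuxData C d φ ψ) (m : ℕ) (y : C (m + 1)) (hy : d (m + 1) y = 0) :
    ψ m (h.Z m y hy) = 0 :=
  (h.zex m y hy).choose_spec.1

theorem Zd (h : ConeAuxData C d φ ψ) (m : ℕ) (y : C (m + 1)) (hy : d (m + 1) y = 0) :
    d m (h.Z m y hy) = φ (m + 1) (ψ (m + 1) y) - y :=
  (h.zex m y hy).choose_spec.2

theorem Zuniq (h : ConeAuxData C d φ ψ) {z z' : C 0} (hz : ψ 0 z = 0) (hz' : ψ 0 z' = 0)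
    (hzd : d 0 z = d 0 z') : z = z' := by
  have := h.hK₀ (z - z') (by rw [map_sub, hz, hz', sub_self])
    (by rw [map_sub, hzd, sub_self])
  exact sub_eq_zero.mp this

/-! ### Degree 1 -/

noncomputable def F1 (h : ConeAuxData C d φ ψ) :
    ConeCocycle₁ C d ψ → ConeCocycle₁ C d φ := fun p =>
  ⟨(-(φ 0 p.1.1) + h.Z 0 p.1.2 p.2.1, p.1.2), p.2.1, by
    have hzd : d 0 (h.Z 0 p.1.2 p.2.1) = φ 1 (ψ 1 p.1.2) - p.1.2 := h.Zd 0 p.1.2 p.2.1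
    have hφ0 : ∀ w : C 0, d 0 (φ 0 w) = φ 1 (d 0 w) := h.hφ 0
    have hxy : ψ 1 p.1.2 - p.1.2 = d 0 p.1.1 := p.2.2
    show φ 1 p.1.2 - p.1.2 = d 0 (-(φ 0 p.1.1) + h.Z 0 p.1.2 p.2.1)
    rw [map_add, hzd, map_neg, hφ0, ← hxy, map_sub]
    abel⟩

def G1 (h : ConeAuxData C d φ ψ) :
    ConeCocycle₁ C d φ → ConeCocycle₁ C d ψ := fun q =>
  ⟨(-(ψ 0 q.1.1), q.1.2), q.2.1, by
    have hψ0 : ∀ w : C 0, d 0 (ψ 0 w) = ψ 1 (d 0 w) := h.hψ 0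
    have hψφ1 : ∀ w : C 1, ψ 1 (φ 1 w) = w := h.hψφ 1
    have huv : φ 1 q.1.2 - q.1.2 = d 0 q.1.1 := q.2.2
    show ψ 1 q.1.2 - q.1.2 = d 0 (-(ψ 0 q.1.1))
    rw [map_neg, hψ0, ← huv, map_sub, hψφ1]
    abel⟩

theorem G1F1 (h : ConeAuxData C d φ ψ) (p : ConeCocycle₁ C d ψ) : h.G1 (h.F1 p) = p := by
  obtain ⟨⟨x, y⟩, hy, hxy⟩ := p
  dsimp only at hy hxy
  refine Subtype.ext (Prod.ext ?_ rfl)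
  show -(ψ 0 (-(φ 0 x) + h.Z 0 y hy)) = x
  rw [map_add, map_neg, h.hψφ, h.Zψ, add_zero, neg_neg]

theorem F1G1 (h : ConeAuxData C d φ ψ) (q : ConeCocycle₁ C d φ) : h.F1 (h.G1 q) = q := by
  obtain ⟨⟨u, v⟩, hv, huv⟩ := q
  dsimp only at hv huv
  have hφ0 : ∀ w : C 0, d 0 (φ 0 w) = φ 1 (d 0 w) := h.hφ 0
  have hψ0 : ∀ w : C 0, d 0 (ψ 0 w) = ψ 1 (d 0 w) := h.hψ 0
  have hψφ1 : ∀ w : C 1, ψ 1 (φ 1 w) = w := h.hψφ 1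
  have hzd : d 0 (h.Z 0 v hv) = φ 1 (ψ 1 v) - v := h.Zd 0 v hv
  have hz : h.Z 0 v hv = u - φ 0 (ψ 0 u) := by
    refine h.Zuniq (h.Zψ 0 v hv) ?_ ?_
    · rw [map_sub, h.hψφ, sub_self]
    · rw [hzd, map_sub, hφ0, hψ0, ← huv]
      simp only [map_sub, hψφ1]
      abel
  refine Subtype.ext (Prod.ext ?_ rfl)
  show -(φ 0 (-(ψ 0 u))) + h.Z 0 v hv = u
  rw [hz, map_neg]
  abel

theorem F1rel (h : ConeAuxData C d φ ψ) (p p' : ConeCocycle₁ C d ψ)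
    (hpp' : ConeBoundaryRel₁ C d ψ p p') :
    ConeBoundaryRel₁ C d φ (h.F1 p) (h.F1 p') := by
  obtain ⟨⟨x, y⟩, hy, hxy⟩ := p
  obtain ⟨⟨x', y'⟩, hy', hxy'⟩ := p'
  obtain ⟨b, h1, h2⟩ := hpp'
  dsimp only at hy hxy hy' hxy' h1 h2
  have hφ0 : ∀ w : C 0, d 0 (φ 0 w) = φ 1 (d 0 w) := h.hφ 0
  have hψ0 : ∀ w : C 0, d 0 (ψ 0 w) = ψ 1 (d 0 w) := h.hψ 0
  have hzd : d 0 (h.Z 0 y hy) = φ 1 (ψ 1 y) - y := h.Zd 0 y hy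
  have hzd' : d 0 (h.Z 0 y' hy') = φ 1 (ψ 1 y') - y' := h.Zd 0 y' hy'
  have hz : h.Z 0 y hy = h.Z 0 y' hy' + (φ 0 (ψ 0 b) - b) := by
    refine h.Zuniq (h.Zψ 0 y hy) ?_ ?_
    · simp only [map_add, map_sub, h.hψφ, h.Zψ]
      abel
    · rw [hzd, map_add, hzd', map_sub, hφ0, hψ0, h2]
      simp only [map_add, map_sub]
      abel
  refine ⟨b, ?_, h2⟩
  show -(φ 0 x) + h.Z 0 y hy = (-(φ 0 x') + h.Z 0 y' hy') + (φ 0 b - b)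
  rw [hz, h1]
  simp only [map_add, map_sub]
  abel

theorem G1rel (h : ConeAuxData C d φ ψ) (q q' : ConeCocycle₁ C d φ)
    (hqq' : ConeBoundaryRel₁ C d φ q q') :
    ConeBoundaryRel₁ C d ψ (h.G1 q) (h.G1 q') := by
  obtain ⟨⟨u, v⟩, hv, huv⟩ := q
  obtain ⟨⟨u', v'⟩, hv', huv'⟩ := q'
  obtain ⟨b, h1, h2⟩ := hqq'
  dsimp only at h1 h2
  refine ⟨b, ?_, h2⟩
  show -(ψ 0 u) = -(ψ 0 u') + (ψ 0 b - b)
  rw [h1]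
  simp only [map_add, map_sub, h.hψφ]
  abel

theorem F1spec (h : ConeAuxData C d φ ψ) (p : ConeCocycle₁ C d ψ) (z : C 0)
    (hz0 : ψ 0 z = 0) (hzd : d 0 z = φ 1 (ψ 1 p.1.2) - p.1.2)
    (q : ConeCocycle₁ C d φ) (hq1 : q.1.1 = -(φ 0 p.1.1) + z) (hq2 : q.1.2 = p.1.2) :
    h.F1 p = q := by
  obtain ⟨⟨x, y⟩, hy, hxy⟩ := p
  obtain ⟨⟨u, v⟩, hv, huv⟩ := q
  dsimp only at hy hzd hq1 hq2
  have hz : z = h.Z 0 y hy := h.Zuniq hz0 (h.Zψ 0 y hy) (hzd.trans (h.Zd 0 y hy).symm)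
  refine Subtype.ext (Prod.ext ?_ hq2.symm)
  show -(φ 0 x) + h.Z 0 y hy = u
  rw [hq1, hz]

theorem G1spec (h : ConeAuxData C d φ ψ) (q : ConeCocycle₁ C d φ) (p : ConeCocycle₁ C d ψ)
    (hp1 : p.1.1 = -(ψ 0 q.1.1)) (hp2 : p.1.2 = q.1.2) : h.G1 q = p := by
  obtain ⟨⟨u, v⟩, hv, huv⟩ := q
  obtain ⟨⟨x, y⟩, hy, hxy⟩ := p
  exact Subtype.ext (Prod.ext hp1.symm hp2.symm)

/-! ### Degrees `n + 2` -/

noncomputable def F (h : ConeAuxData C d φ ψ) (n : ℕ) :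
    ConeCocycle C d ψ n → ConeCocycle C d φ n := fun p =>
  ⟨(-(φ (n + 1) p.1.1) + h.Z (n + 1) p.1.2 p.2.1, p.1.2), p.2.1, by
    have hzd : d (n + 1) (h.Z (n + 1) p.1.2 p.2.1) = φ (n + 2) (ψ (n + 2) p.1.2) - p.1.2 :=
      h.Zd (n + 1) p.1.2 p.2.1
    have hφ' : ∀ w : C (n + 1), d (n + 1) (φ (n + 1) w) = φ (n + 2) (d (n + 1) w) :=
      h.hφ (n + 1)
    have hxy : ψ (n + 2) p.1.2 - p.1.2 = d (n + 1) p.1.1 := p.2.2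
    show φ (n + 2) p.1.2 - p.1.2 =
      d (n + 1) (-(φ (n + 1) p.1.1) + h.Z (n + 1) p.1.2 p.2.1)
    rw [map_add, hzd, map_neg, hφ', ← hxy, map_sub]
    abel⟩

def G (h : ConeAuxData C d φ ψ) (n : ℕ) :
    ConeCocycle C d φ n → ConeCocycle C d ψ n := fun q =>
  ⟨(-(ψ (n + 1) q.1.1), q.1.2), q.2.1, by
    have hψ' : ∀ w : C (n + 1), d (n + 1) (ψ (n + 1) w) = ψ (n + 2) (d (n + 1) w) :=
      h.hψ (n + 1)
    have hψφ'' : ∀ w : C (n + 2), ψ (n + 2) (φ (n + 2) w) = w := h.hψφ (n + 2)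
    have huv : φ (n + 2) q.1.2 - q.1.2 = d (n + 1) q.1.1 := q.2.2
    show ψ (n + 2) q.1.2 - q.1.2 = d (n + 1) (-(ψ (n + 1) q.1.1))
    rw [map_neg, hψ', ← huv, map_sub, hψφ'']
    abel⟩

theorem GF (h : ConeAuxData C d φ ψ) (n : ℕ) (p : ConeCocycle C d ψ n) :
    h.G n (h.F n p) = p := by
  obtain ⟨⟨x, y⟩, hy, hxy⟩ := p
  dsimp only at hy hxy
  refine Subtype.ext (Prod.ext ?_ rfl)
  show -(ψ (n + 1) (-(φ (n + 1) x) + h.Z (n + 1) y hy)) = x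
  rw [map_add, map_neg, h.hψφ, h.Zψ, add_zero, neg_neg]

theorem FGrel (h : ConeAuxData C d φ ψ) (n : ℕ) (q : ConeCocycle C d φ n) :
    ConeBoundaryRel C d φ n (h.F n (h.G n q)) q := by
  obtain ⟨⟨u, v⟩, hv, huv⟩ := q
  dsimp only at hv huv
  have hφ' : ∀ w : C (n + 1), d (n + 1) (φ (n + 1) w) = φ (n + 2) (d (n + 1) w) :=
    h.hφ (n + 1)
  have hψ' : ∀ w : C (n + 1), d (n + 1) (ψ (n + 1) w) = ψ (n + 2) (d (n + 1) w) :=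
    h.hψ (n + 1)
  have hzψ : ψ (n + 1) (h.Z (n + 1) v hv) = 0 := h.Zψ (n + 1) v hv
  have hzd : d (n + 1) (h.Z (n + 1) v hv) = φ (n + 2) (ψ (n + 2) v) - v :=
    h.Zd (n + 1) v hv
  have hψt : ψ (n + 1) ((-(φ (n + 1) (-(ψ (n + 1) u))) + h.Z (n + 1) v hv) - u) = 0 := by
    simp only [map_sub, map_add, map_neg, h.hψφ, hzψ]
    abel
  have hdt : d (n + 1) ((-(φ (n + 1) (-(ψ (n + 1) u))) + h.Z (n + 1) v hv) - u) = 0 := by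
    simp only [map_sub, map_add, map_neg]
    rw [hφ', hψ', hzd, ← huv]
    simp only [map_sub, h.hψφ]
    abel
  obtain ⟨a, -, ha⟩ := h.hK n _ hψt hdt
  refine ⟨a, 0, ?_, ?_⟩
  · show -(φ (n + 1) (-(ψ (n + 1) u))) + h.Z (n + 1) v hv =
      u + (φ (n + 1) 0 - 0 + d n a)
    rw [ha, map_zero]
    abel
  · show v = v + d (n + 1) 0
    rw [map_zero, add_zero]

theorem Frel (h : ConeAuxData C d φ ψ) (n : ℕ) (p p' : ConeCocycle C d ψ n)
    (hpp' : ConeBoundaryRel C d ψ n p p') :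
    ConeBoundaryRel C d φ n (h.F n p) (h.F n p') := by
  obtain ⟨⟨x, y⟩, hy, hxy⟩ := p
  obtain ⟨⟨x', y'⟩, hy', hxy'⟩ := p'
  obtain ⟨a, b, h1, h2⟩ := hpp'
  dsimp only at hy hxy hy' hxy' h1 h2
  have hφ' : ∀ w : C (n + 1), d (n + 1) (φ (n + 1) w) = φ (n + 2) (d (n + 1) w) :=
    h.hφ (n + 1)
  have hψ' : ∀ w : C (n + 1), d (n + 1) (ψ (n + 1) w) = ψ (n + 2) (d (n + 1) w) :=
    h.hψ (n + 1)
  have hzd : d (n + 1) (h.Z (n + 1) y hy) = φ (n + 2) (ψ (n + 2) y) - y :=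
    h.Zd (n + 1) y hy
  have hzd' : d (n + 1) (h.Z (n + 1) y' hy') = φ (n + 2) (ψ (n + 2) y') - y' :=
    h.Zd (n + 1) y' hy'
  have hψt : ψ (n + 1) (h.Z (n + 1) y hy - h.Z (n + 1) y' hy'
      - (φ (n + 1) (ψ (n + 1) b) - b)) = 0 := by
    simp only [map_sub, h.hψφ, h.Zψ]
    abel
  have hdt : d (n + 1) (h.Z (n + 1) y hy - h.Z (n + 1) y' hy'
      - (φ (n + 1) (ψ (n + 1) b) - b)) = 0 := by
    simp only [map_sub]
    rw [hzd, hzd', hφ', hψ', h2]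
    simp only [map_add, map_sub]
    abel
  obtain ⟨a₀, -, ha₀⟩ := h.hK n _ hψt hdt
  refine ⟨a₀ - φ n a, b, ?_, h2⟩
  have hsplit : d n (a₀ - φ n a) = d n a₀ - d n (φ n a) := map_sub _ _ _
  show -(φ (n + 1) x) + h.Z (n + 1) y hy =
    (-(φ (n + 1) x') + h.Z (n + 1) y' hy') + (φ (n + 1) b - b + d n (a₀ - φ n a))
  rw [hsplit, ha₀, h1, h.hφ n]
  simp only [map_add, map_sub, map_neg]
  abel

theorem Grel (h : ConeAuxData C d φ ψ) (n : ℕ) (q q' : ConeCocycle C d φ n)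
    (hqq' : ConeBoundaryRel C d φ n q q') :
    ConeBoundaryRel C d ψ n (h.G n q) (h.G n q') := by
  obtain ⟨⟨u, v⟩, hv, huv⟩ := q
  obtain ⟨⟨u', v'⟩, hv', huv'⟩ := q'
  obtain ⟨a, b, h1, h2⟩ := hqq'
  dsimp only at h1 h2
  refine ⟨-(ψ n a), b, ?_, h2⟩
  have hsplit : d n (-(ψ n a)) = -(ψ (n + 1) (d n a)) := by rw [map_neg, h.hψ n]
  show -(ψ (n + 1) u) = -(ψ (n + 1) u') + (ψ (n + 1) b - b + d n (-(ψ n a)))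
  rw [hsplit, h1]
  simp only [map_add, map_sub, map_neg, h.hψφ]
  abel

theorem Fspec (h : ConeAuxData C d φ ψ) (n : ℕ) (p : ConeCocycle C d ψ n) (z : C (n + 1))
    (hz0 : ψ (n + 1) z = 0)
    (hzd : d (n + 1) z = φ (n + 2) (ψ (n + 2) p.1.2) - p.1.2)
    (q : ConeCocycle C d φ n) (hq1 : q.1.1 = -(φ (n + 1) p.1.1) + z)
    (hq2 : q.1.2 = p.1.2) :
    ConeBoundaryRel C d φ n q (h.F n p) := by
  obtain ⟨⟨x, y⟩, hy, hxy⟩ := p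
  obtain ⟨⟨u, v⟩, hv, huv⟩ := q
  dsimp only at hy hzd hq1 hq2
  have hdd : d (n + 1) z = d (n + 1) (h.Z (n + 1) y hy) :=
    hzd.trans (h.Zd (n + 1) y hy).symm
  have hψt : ψ (n + 1) (z - h.Z (n + 1) y hy) = 0 := by
    rw [map_sub, hz0, h.Zψ, sub_self]
  have hdt : d (n + 1) (z - h.Z (n + 1) y hy) = 0 := by
    rw [map_sub, hdd, sub_self]
  obtain ⟨a, -, ha⟩ := h.hK n _ hψt hdt
  refine ⟨a, 0, ?_, ?_⟩
  · show u = (-(φ (n + 1) x) + h.Z (n + 1) y hy) + (φ (n + 1) 0 - 0 + d n a)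
    rw [hq1, ha, map_zero]
    abel
  · show v = y + d (n + 1) 0
    rw [hq2, map_zero, add_zero]

theorem Gspec (h : ConeAuxData C d φ ψ) (n : ℕ) (q : ConeCocycle C d φ n)
    (p : ConeCocycle C d ψ n) (hp1 : p.1.1 = -(ψ (n + 1) q.1.1)) (hp2 : p.1.2 = q.1.2) :
    h.G n q = p := by
  obtain ⟨⟨u, v⟩, hv, huv⟩ := q
  obtain ⟨⟨x, y⟩, hy, hxy⟩ := p
  exact Subtype.ext (Prod.ext hp1.symm hp2.symm)

end ConeAuxData

/-- Let `C^•` be a cochain complex of abelian groups concentrated in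
nonnegative degrees, and `φ, ψ : C^• → C^•` chain maps with `ψ ∘ φ = id`.  If the kernel
subcomplex `K^• = ker ψ` is exact, then the mapping cones of `φ − id` and `ψ − id` have
isomorphic cohomology in every degree `i ≥ 0`, an isomorphism being realized by
`(x, y) ↦ (−φ(x) + z, y)` where `z ∈ ker ψ` is any element with `dz = (φψ − 1)(y)`,
with inverse realized by `(u, v) ↦ (−ψ(u), v)`. -/
theorem cone_cohomology_comparison
    (hd : ∀ n (x : C n), d (n + 1) (d n x) = 0)
    (φ ψ : ∀ n, C n →+ C n)
    (hφ : ∀ n (x : C n), d n (φ n x) = φ (n + 1) (d n x))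
    (hψ : ∀ n (x : C n), d n (ψ n x) = ψ (n + 1) (d n x))
    (hψφ : ∀ n (x : C n), ψ n (φ n x) = x)
    (hK₀ : ∀ y : C 0, ψ 0 y = 0 → d 0 y = 0 → y = 0)
    (hK : ∀ n (y : C (n + 1)), ψ (n + 1) y = 0 → d (n + 1) y = 0 →
      ∃ z : C n, ψ n z = 0 ∧ d n z = y) :
    -- degree 0: both cohomologies consist of cocycles, and the isomorphism is `y ↦ y`
    (∃ e : ConeCocycle₀ C d ψ ≃ ConeCocycle₀ C d φ,
      (∀ (p : ConeCocycle₀ C d ψ) (q : ConeCocycle₀ C d φ), q.1 = p.1 → e p = q) ∧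
      (∀ (q : ConeCocycle₀ C d φ) (p : ConeCocycle₀ C d ψ), p.1 = q.1 → e.symm q = p)) ∧
    -- degree 1
    (∃ e : ConeCohomology₁ C d ψ ≃ ConeCohomology₁ C d φ,
      (∀ (p : ConeCocycle₁ C d ψ) (z : C 0), ψ 0 z = 0 →
        d 0 z = φ 1 (ψ 1 p.1.2) - p.1.2 →
        ∀ q : ConeCocycle₁ C d φ, q.1.1 = -(φ 0 p.1.1) + z → q.1.2 = p.1.2 →
          e (Quot.mk _ p) = Quot.mk _ q) ∧
      (∀ (q : ConeCocycle₁ C d φ) (p : ConeCocycle₁ C d ψ),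
        p.1.1 = -(ψ 0 q.1.1) → p.1.2 = q.1.2 →
          e.symm (Quot.mk _ q) = Quot.mk _ p)) ∧
    -- degrees `n + 2`
    (∀ n : ℕ, ∃ e : ConeCohomology C d ψ n ≃ ConeCohomology C d φ n,
      (∀ (p : ConeCocycle C d ψ n) (z : C (n + 1)), ψ (n + 1) z = 0 →
        d (n + 1) z = φ (n + 2) (ψ (n + 2) p.1.2) - p.1.2 →
        ∀ q : ConeCocycle C d φ n,
          q.1.1 = -(φ (n + 1) p.1.1) + z → q.1.2 = p.1.2 →
          e (Quot.mk _ p) = Quot.mk _ q) ∧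
      (∀ (q : ConeCocycle C d φ n) (p : ConeCocycle C d ψ n),
        p.1.1 = -(ψ (n + 1) q.1.1) → p.1.2 = q.1.2 →
          e.symm (Quot.mk _ q) = Quot.mk _ p)) := by
  have h : ConeAuxData C d φ ψ := ⟨hφ, hψ, hψφ, hK₀, hK⟩
  refine ⟨?_, ?_, ?_⟩
  · -- degree 0
    have key : ∀ y : C 0, d 0 y = 0 → ψ 0 y = y → φ 0 y = y := by
      intro y hy hy2
      have := hK₀ (φ 0 y - y) (by rw [map_sub, hψφ, hy2, sub_self])
        (by rw [map_sub, hφ, hy, map_zero, sub_zero])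
      exact sub_eq_zero.mp this
    have key2 : ∀ y : C 0, d 0 y = 0 → φ 0 y = y → ψ 0 y = y := by
      intro y _ hy2
      calc ψ 0 y = ψ 0 (φ 0 y) := by rw [hy2]
        _ = y := hψφ 0 y
    exact ⟨⟨fun p => ⟨p.1, p.2.1, key p.1 p.2.1 p.2.2⟩,
            fun q => ⟨q.1, q.2.1, key2 q.1 q.2.1 q.2.2⟩,
            fun p => rfl, fun q => rfl⟩,
          fun p q hq => Subtype.ext hq.symm,
          fun q p hp => Subtype.ext hp.symm⟩
  · -- degree 1
    refine ⟨⟨Quot.lift (fun p => Quot.mk (ConeBoundaryRel₁ C d φ) (h.F1 p))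
        (fun p p' hp => Quot.sound (h.F1rel p p' hp)),
      Quot.lift (fun q => Quot.mk (ConeBoundaryRel₁ C d ψ) (h.G1 q))
        (fun q q' hq => Quot.sound (h.G1rel q q' hq)), ?_, ?_⟩, ?_, ?_⟩
    · intro x
      induction x using Quot.ind with
      | _ p => exact congrArg (Quot.mk _) (h.G1F1 p)
    · intro x
      induction x using Quot.ind with
      | _ q => exact congrArg (Quot.mk _) (h.F1G1 q)
    · intro p z hz0 hzd q hq1 hq2
      exact congrArg (Quot.mk _) (h.F1spec p z hz0 hzd q hq1 hq2)
    · intro q p hp1 hp2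
      exact congrArg (Quot.mk _) (h.G1spec q p hp1 hp2)
  · -- degrees n + 2
    intro n
    refine ⟨⟨Quot.lift (fun p => Quot.mk (ConeBoundaryRel C d φ n) (h.F n p))
        (fun p p' hp => Quot.sound (h.Frel n p p' hp)),
      Quot.lift (fun q => Quot.mk (ConeBoundaryRel C d ψ n) (h.G n q))
        (fun q q' hq => Quot.sound (h.Grel n q q' hq)), ?_, ?_⟩, ?_, ?_⟩
    · intro x
      induction x using Quot.ind with
      | _ p => exact congrArg (Quot.mk _) (h.GF n p)
    · intro x
      induction x using Quot.ind with
      | _ q => exact Quot.sound (h.FGrel n q)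
    · intro p z hz0 hzd q hq1 hq2
      exact (Quot.sound (h.Fspec n p z hz0 hzd q hq1 hq2)).symm
    · intro q p hp1 hp2
      exact congrArg (Quot.mk _) (h.Gspec n q p hp1 hp2)

end ConeComparison
end

section
/- Let p be an odd prime, ℂ_p the completion of an algebraic closure of ℚ_p, and O its ring of integers. Let Ẽ⁺ = lim_{x↦x^p} O be the tilt: the set of sequences (x^{(n)})_{n≥0} with x^{(n)} ∈ O and (x^{(n+1)})^p = x^{(n)}, which is a perfect ring of characteristic p under coordinatewise multiplication and the addition (x + y)^{(n)} = lim_{m→∞} (x^{(n+m)} + y^{(n+m)})^{p^m}. Let W(Ẽ⁺) be the ring of p-typical Witt vectors of Ẽ⁺ and θ : W(Ẽ⁺) → O Fontaine's ring homomorphism, given by θ(Σ_{k≥0} p^k[z_k]) = Σ_{k≥0} p^k z_k^{(0)}, where [·] denotes the Teichmüller lift. Choose ε ∈ Ẽ⁺ with ε^{(0)} = 1 and ε^{(1)} ≠ 1 (a compatible system of primitive p-power roots of unity), and let ε^{1/p} ∈ Ẽ⁺ be defined by (ε^{1/p})^{(n)} = ε^{(n+1)}. Then ker(θ) is a principal ideal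 of W(Ẽ⁺), generated by ω = ([ε] − 1)/([ε^{1/p}] − 1) = Σ_{i=0}^{p−1} [ε^{1/p}]^i. -/
open Filter

/-- The ring of integers `O = {x : ‖x‖ ≤ 1}` of a nonarchimedean normed field. -/
def integerRing (K : Type*) [NormedField K] [IsUltrametricDist K] : Subring K where
  carrier := {x | ‖x‖ ≤ 1}
  one_mem' := by simp
  mul_mem' := fun {a b} ha hb => by
    simpa [norm_mul] using mul_le_one₀ ha (norm_nonneg b) hb
  zero_mem' := by simp
  add_mem' := fun {a b} ha hb =>
    le_trans (IsUltrametricDist.norm_add_le_max a b) (max_le ha hb)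
  neg_mem' := fun {a} ha => by simpa using ha

/-- The tilt `Ẽ⁺ = lim_{x ↦ x^p} O`: sequences `(x^{(n)})` in `O` with
`(x^{(n+1)})^p = x^{(n)}`. -/
def TiltSeq (p : ℕ) (K : Type*) [NormedField K] [IsUltrametricDist K] : Type _ :=
  {f : ℕ → integerRing K // ∀ n, (f (n + 1)) ^ p = f n}

/-- The element `ε^{1/p}` obtained from `ε` by shifting the defining sequence. -/
def tiltShift (p : ℕ) (K : Type*) [NormedField K] [IsUltrametricDist K]
    (ε : TiltSeq p K) : TiltSeq p K :=
  ⟨fun n => ε.1 (n + 1), fun n => ε.2 (n + 1)⟩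

/-!
`ω` lies in `ker θ` because `θ(ω) = Σ ζ^i` for the primitive `p`-th root of unity
`ζ = ε^{(1)}`, and `([ε^{1/p}] − 1) ω = [ε] − 1` is a geometric sum.

Conversely, in the characteristic-`p` tilt the zeroth Witt coordinate of `ω` is
`Σ_{i<p} t^i = (t − 1)^{p−1}` with `t = ε^{1/p}`, and `(t − 1)^{(0)}` is the limit of
`(ζ_{p^{m+1}} − 1)^{p^m}`, whose norm is at least `|p|^{1/(p−1)}` by the cyclotomic relation
`p = Π (1 − ζ^i)`. The zeroth coordinate `a` of any `α ∈ ker θ` has `|a^{(0)}| ≤ |p|`, so it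
is divisible in the tilt by the zeroth coordinate of `ω`, and `α = ω [u] + p β` with
`β ∈ ker θ`. So `ker θ ⊆ (ω) + p ker θ`, which forces `ker θ = (ω)` because `W(Ẽ⁺)` is
`p`-adically complete.
-/

theorem IsHausdorff.submodule {R : Type*} [CommRing R] {I : Ideal R} {M : Type*} [AddCommGroup M]
    [Module R M] [IsHausdorff I M] (N : Submodule R M) : IsHausdorff I N := by
  refine ⟨fun x hx => Subtype.ext (IsHausdorff.haus ‹_› (x : M) fun n => ?_)⟩
  have := (Submodule.mem_smul_top_iff (I ^ n) N x).mp (by simpa [SModEq.zero] using hx n)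
  simpa [SModEq.zero] using Submodule.smul_mono le_rfl le_top this

theorem Ideal.eq_span_singleton_of_le_sup_mul {R : Type*} [CommRing R] {I N : Ideal R}
    [IsAdicComplete I R] {x : R} (hx : x ∈ N) (h : N ≤ Ideal.span {x} ⊔ I * N) :
    N = Ideal.span {x} := by
  refine le_antisymm (fun y hy => ?_) ((Ideal.span_singleton_le_iff_mem N).mpr hx)
  have : IsHausdorff I N := IsHausdorff.submodule N
  have hsurj : Function.Surjective (LinearMap.toSpanSingleton R N ⟨x, hx⟩) := by
    apply surjective_of_mkQ_comp_surjective (I := I)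
    intro z
    obtain ⟨z, rfl⟩ := Submodule.mkQ_surjective _ z
    obtain ⟨a, ha, b, hb, hab⟩ := Submodule.mem_sup.mp (h z.2)
    obtain ⟨c, rfl⟩ := Ideal.mem_span_singleton'.mp ha
    refine ⟨c, (Submodule.Quotient.eq _).mpr ?_⟩
    rw [Submodule.mem_smul_top_iff]
    have hdiff : ((LinearMap.toSpanSingleton R N ⟨x, hx⟩ c - z : N) : R) = -b := by
      rw [Submodule.coe_sub, ← hab]
      simp
    rw [hdiff]
    exact neg_mem hb
  obtain ⟨c, hc⟩ := hsurj ⟨y, hy⟩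
  exact Ideal.mem_span_singleton'.mpr ⟨c, by simpa using congrArg Subtype.val hc⟩

theorem geom_sum_eq_sub_one_pow_of_charP {R : Type*} [CommRing R] {p : ℕ} [hp : Fact p.Prime]
    [CharP R p] (x : R) : ∑ i ∈ Finset.range p, x ^ i = (x - 1) ^ (p - 1) := by
  have h := congrArg (Polynomial.eval x)
    (Polynomial.cyclotomic_mul_prime_eq_pow_of_not_dvd R (n := 1) hp.out.not_dvd_one)
  simpa [Polynomial.cyclotomic_prime, Polynomial.cyclotomic_one, Polynomial.eval_geom_sum] using h

namespace TiltSeq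

variable {p : ℕ} {K : Type*} [NormedField K] [IsUltrametricDist K]

theorem ext {x y : TiltSeq p K} (h : ∀ n, (x.1 n : K) = y.1 n) : x = y :=
  Subtype.ext (funext fun n => Subtype.ext (h n))

theorem coe_succ_pow (x : TiltSeq p K) (n : ℕ) : (x.1 (n + 1) : K) ^ p = x.1 n :=
  congrArg Subtype.val (x.2 n)

theorem coe_add_pow_pow (x : TiltSeq p K) (n m : ℕ) : (x.1 (n + m) : K) ^ p ^ m = x.1 n := by
  induction m with
  | zero => simp
  | succ m ih => rw [pow_succ', pow_mul, ← add_assoc, coe_succ_pow, ih]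

theorem coe_pow_pow (x : TiltSeq p K) (n : ℕ) : (x.1 n : K) ^ p ^ n = x.1 0 := by
  simpa using coe_add_pow_pow x 0 n

theorem coe_eq_zero_iff [Fact p.Prime] (x : TiltSeq p K) (n : ℕ) :
    (x.1 n : K) = 0 ↔ (x.1 0 : K) = 0 := by
  rw [← coe_pow_pow x n, pow_eq_zero_iff (pow_ne_zero n (Fact.out : p.Prime).ne_zero)]

theorem isPrimitiveRoot_coe_succ [Fact p.Prime] {ε : TiltSeq p K} (hε0 : (ε.1 0 : K) = 1)
    (hε1 : (ε.1 1 : K) ≠ 1) (m : ℕ) : IsPrimitiveRoot (ε.1 (m + 1) : K) (p ^ (m + 1)) := by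
  rw [IsPrimitiveRoot.iff_orderOf]
  refine orderOf_eq_prime_pow ?_ (by rw [coe_pow_pow, hε0])
  rwa [add_comm, coe_add_pow_pow]

end TiltSeq

theorem IsPrimitiveRoot.norm_natCast_le_norm_sub_one_pow {K : Type*} [NormedField K]
    [IsUltrametricDist K] {p : ℕ} [hp : Fact p.Prime] {ζ : K} {k : ℕ}
    (hζ : IsPrimitiveRoot ζ (p ^ (k + 1))) :
    ‖(p : K)‖ ≤ ‖ζ - 1‖ ^ (p ^ k * (p - 1)) := by
  have hpos : 0 < p ^ (k + 1) := pow_pos hp.out.pos _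
  have hζnorm : ‖ζ‖ ≤ 1 := by
    refine ((pow_eq_one_iff_of_nonneg (norm_nonneg ζ) hpos.ne').mp ?_).le
    rw [← norm_pow, hζ.pow_eq_one, norm_one]
  have hprod : (p : K) = ∏ μ ∈ primitiveRoots (p ^ (k + 1)) K, (1 - μ) := by
    rw [← Polynomial.eval_one_cyclotomic_prime_pow (R := K) k,
      Polynomial.cyclotomic_eq_prod_X_sub_primitiveRoots hζ, Polynomial.eval_prod]
    simp
  have hfactor : ∀ μ ∈ primitiveRoots (p ^ (k + 1)) K, ‖1 - μ‖ ≤ ‖ζ - 1‖ := by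
    intro μ hμ
    obtain ⟨i, -, rfl⟩ := hζ.eq_pow_of_pow_eq_one ((mem_primitiveRoots hpos).mp hμ).pow_eq_one
    -- `1 - ζ^i = -(1 + ζ + ⋯ + ζ^(i-1))(ζ - 1)`
    have hsum : ‖∑ j ∈ Finset.range i, ζ ^ j‖ ≤ 1 :=
      IsUltrametricDist.norm_sum_le_of_forall_le_of_nonneg zero_le_one fun j _ => by
        rw [norm_pow]; exact pow_le_one₀ (norm_nonneg _) hζnorm
    rw [← neg_sub, norm_neg, ← geom_sum_mul, norm_mul]
    exact mul_le_of_le_one_left (norm_nonneg _) hsum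
  calc ‖(p : K)‖ = ∏ μ ∈ primitiveRoots (p ^ (k + 1)) K, ‖1 - μ‖ := by
        rw [hprod, norm_prod]
    _ ≤ ∏ _μ ∈ primitiveRoots (p ^ (k + 1)) K, ‖ζ - 1‖ :=
      Finset.prod_le_prod (fun _ _ => norm_nonneg _) hfactor
    _ = ‖ζ - 1‖ ^ (p ^ k * (p - 1)) := by
      rw [Finset.prod_const, hζ.card_primitiveRoots, Nat.totient_prime_pow_succ hp.out]

/-- The laws that make an arbitrary ring structure on `TiltSeq p K` the one of the tilt. -/
structure IsTiltRing (p : ℕ) (K : Type*) [NormedField K] [IsUltrametricDist K]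
    [CommRing (TiltSeq p K)] : Prop where
  coe_one : ∀ n, ((1 : TiltSeq p K).1 n : K) = 1
  coe_zero : ∀ n, ((0 : TiltSeq p K).1 n : K) = 0
  coe_mul : ∀ (x y : TiltSeq p K) (n : ℕ), ((x * y).1 n : K) = (x.1 n : K) * (y.1 n : K)
  tendsto_add : ∀ (x y : TiltSeq p K) (n : ℕ),
    Tendsto (fun m : ℕ => ((x.1 (n + m) + y.1 (n + m)) ^ p ^ m : integerRing K))
      atTop (nhds ((x + y).1 n))

namespace IsTiltRing

variable {p : ℕ} {K : Type*} [NormedField K] [IsUltrametricDist K] [CommRing (TiltSeq p K)]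

theorem coe_pow (hT : IsTiltRing p K) (x : TiltSeq p K) (j n : ℕ) :
    ((x ^ j).1 n : K) = (x.1 n : K) ^ j := by
  induction j with
  | zero => rw [pow_zero, pow_zero, hT.coe_one]
  | succ j ih => rw [pow_succ, pow_succ, hT.coe_mul, ih]

theorem eq_zero_of_coe_zero [Fact p.Prime] (hT : IsTiltRing p K) {x : TiltSeq p K}
    (h : (x.1 0 : K) = 0) : x = 0 :=
  TiltSeq.ext fun n => by rw [hT.coe_zero, TiltSeq.coe_eq_zero_iff, h]

theorem nontrivial (hT : IsTiltRing p K) : Nontrivial (TiltSeq p K) := by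
  refine ⟨1, 0, fun h => one_ne_zero (α := K) ?_⟩
  simpa [hT.coe_one, hT.coe_zero] using congrArg (fun z : TiltSeq p K => (z.1 0 : K)) h

theorem isDomain [Fact p.Prime] (hT : IsTiltRing p K) : IsDomain (TiltSeq p K) := by
  have := hT.nontrivial
  have : NoZeroDivisors (TiltSeq p K) := by
    refine ⟨fun {x y} hxy => ?_⟩
    have h0 : (x.1 0 : K) * y.1 0 = 0 := by rw [← hT.coe_mul, hxy, hT.coe_zero]
    exact (mul_eq_zero.mp h0).imp hT.eq_zero_of_coe_zero hT.eq_zero_of_coe_zero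
  exact NoZeroDivisors.to_isDomain _

theorem tiltShift_pow (hT : IsTiltRing p K) (x : TiltSeq p K) : tiltShift p K x ^ p = x :=
  TiltSeq.ext fun n => by rw [hT.coe_pow]; exact TiltSeq.coe_succ_pow x n

theorem perfectRing [Fact p.Prime] (hT : IsTiltRing p K) [CharP (TiltSeq p K) p] :
    PerfectRing (TiltSeq p K) p :=
  have := hT.isDomain
  PerfectRing.ofSurjective _ p fun x => ⟨tiltShift p K x, hT.tiltShift_pow x⟩

theorem dvd_of_norm_coe_zero_le [hp : Fact p.Prime] (hT : IsTiltRing p K) {a w : TiltSeq p K}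
    (hw : w ≠ 0) (h : ‖(a.1 0 : K)‖ ≤ ‖(w.1 0 : K)‖) : w ∣ a := by
  have hwn (n : ℕ) : (w.1 n : K) ≠ 0 :=
    (not_congr (TiltSeq.coe_eq_zero_iff w n)).mpr fun h0 => hw (hT.eq_zero_of_coe_zero h0)
  have hnorm (n : ℕ) : ‖(a.1 n : K)‖ ≤ ‖(w.1 n : K)‖ := by
    refine le_of_pow_le_pow_left₀ (pow_ne_zero n hp.out.ne_zero) (norm_nonneg _) ?_
    rwa [← norm_pow, ← norm_pow, TiltSeq.coe_pow_pow, TiltSeq.coe_pow_pow]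
  let u : TiltSeq p K := ⟨fun n => ⟨(a.1 n : K) / w.1 n,
    (norm_div _ _).trans_le (div_le_one_of_le₀ (hnorm n) (norm_nonneg _))⟩,
    fun n => Subtype.ext (by simp only [SubmonoidClass.coe_pow, div_pow, TiltSeq.coe_succ_pow])⟩
  refine ⟨u, TiltSeq.ext fun n => ?_⟩
  rw [hT.coe_mul]
  exact (mul_div_cancel₀ _ (hwn n)).symm

theorem tendsto_coe_add (hT : IsTiltRing p K) (x y : TiltSeq p K) (n : ℕ) :
    Tendsto (fun m : ℕ => ((x.1 (n + m) : K) + y.1 (n + m)) ^ p ^ m) atTop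
      (nhds ((x + y).1 n : K)) := by
  refine .congr (fun m => ?_) ((continuous_subtype_val.tendsto _).comp (hT.tendsto_add x y n))
  simp

theorem norm_coe_add_sub_le [hp : Fact p.Prime] (hT : IsTiltRing p K) (x y : TiltSeq p K)
    (n : ℕ) : ‖((x + y).1 n : K) - (x.1 n + y.1 n)‖ ≤ ‖(p : K)‖ := by
  refine le_of_tendsto ((hT.tendsto_coe_add x y n).sub_const _).norm (Eventually.of_forall ?_)
  intro m
  obtain ⟨r, hr⟩ := exists_add_pow_prime_pow_eq hp.out (x.1 (n + m)) (y.1 (n + m)) m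
  have hrK : ((x.1 (n + m) : K) + y.1 (n + m)) ^ p ^ m - (x.1 n + y.1 n) =
      p * (x.1 (n + m) * y.1 (n + m) * r : integerRing K) := by
    have := congrArg Subtype.val hr
    push_cast at this ⊢
    rw [this, TiltSeq.coe_add_pow_pow, TiltSeq.coe_add_pow_pow]
    ring
  rw [hrK, norm_mul]
  exact mul_le_of_le_one_right (norm_nonneg _) (x.1 (n + m) * y.1 (n + m) * r).2

theorem norm_coe_natCast_sub_le [Fact p.Prime] (hT : IsTiltRing p K) (k n : ℕ) :
    ‖((k : TiltSeq p K).1 n : K) - k‖ ≤ ‖(p : K)‖ := by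
  induction k with
  | zero => simp [hT.coe_zero]
  | succ k ih =>
    have hsplit : (((k + 1 : ℕ) : TiltSeq p K).1 n : K) - (k + 1 : ℕ) =
        (((k : TiltSeq p K) + 1).1 n - ((k : TiltSeq p K).1 n + (1 : TiltSeq p K).1 n)) +
          ((k : TiltSeq p K).1 n - k) := by
      rw [hT.coe_one]; push_cast; ring
    rw [hsplit]
    exact (IsUltrametricDist.norm_add_le_max _ _).trans (max_le (hT.norm_coe_add_sub_le _ _ n) ih)

theorem charP [hp : Fact p.Prime] (hT : IsTiltRing p K) (hpK : ‖(p : K)‖ < 1) :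
    CharP (TiltSeq p K) p := by
  have := hT.nontrivial
  rw [CharP.charP_iff_prime_eq_zero hp.out]
  have hlim : Tendsto (fun n => ‖(p : K)‖ ^ p ^ n) atTop (nhds 0) :=
    (tendsto_pow_atTop_nhds_zero_of_lt_one (norm_nonneg _) hpK).comp
      (tendsto_pow_atTop_atTop_of_one_lt hp.out.one_lt)
  refine hT.eq_zero_of_coe_zero (norm_le_zero_iff.mp
    (ge_of_tendsto hlim (Eventually.of_forall fun n => ?_)))
  have hcoord : ‖((p : TiltSeq p K).1 n : K)‖ ≤ ‖(p : K)‖ := by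
    simpa using (IsUltrametricDist.norm_add_le_max _ _).trans
      (max_le (hT.norm_coe_natCast_sub_le p n) le_rfl)
  rw [← TiltSeq.coe_pow_pow _ n, norm_pow]
  exact pow_le_pow_left₀ (norm_nonneg _) hcoord _

theorem coe_neg_one [Fact p.Prime] (hT : IsTiltRing p K) (hodd : Odd p) (n : ℕ) :
    ((-1 : TiltSeq p K).1 n : K) = -1 := by
  let c : TiltSeq p K := ⟨fun _ => -1, fun _ => by rw [hodd.neg_one_pow]⟩
  have hc : 1 + c = 0 := TiltSeq.ext fun k => by
    refine tendsto_nhds_unique (hT.tendsto_coe_add 1 c k) ?_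
    simp [hT.coe_one, c, hT.coe_zero, zero_pow (pow_ne_zero _ (Fact.out : p.Prime).ne_zero)]
  rw [← eq_neg_of_add_eq_zero_right hc]
  rfl

theorem norm_natCast_le_norm_coe_sub_one_pow [Fact p.Prime] (hT : IsTiltRing p K) (hodd : Odd p)
    {ε : TiltSeq p K} (hε0 : (ε.1 0 : K) = 1) (hε1 : (ε.1 1 : K) ≠ 1) :
    ‖(p : K)‖ ≤ ‖((tiltShift p K ε - 1).1 0 : K)‖ ^ (p - 1) := by
  have hlim := ((hT.tendsto_coe_add (tiltShift p K ε) (-1) 0).norm.pow (p - 1))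
  simp only [zero_add, hT.coe_neg_one hodd, ← sub_eq_add_neg] at hlim
  refine ge_of_tendsto hlim (Eventually.of_forall fun m => ?_)
  rw [norm_pow, ← pow_mul]
  exact (TiltSeq.isPrimitiveRoot_coe_succ hε0 hε1 m).norm_natCast_le_norm_sub_one_pow

end IsTiltRing

section Theta

variable {p : ℕ} [Fact p.Prime] {K : Type*} [NormedField K] [IsUltrametricDist K]
  [CommRing (TiltSeq p K)] [CharP (TiltSeq p K) p] [PerfectRing (TiltSeq p K) p]
  {θ : WittVector p (TiltSeq p K) →+* integerRing K}

theorem norm_coe_coeff_zero_le_of_mem_ker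
    (hθ : ∀ z : TiltSeq p K, θ (WittVector.teichmuller p z) = z.1 0)
    {α : WittVector p (TiltSeq p K)} (hα : α ∈ RingHom.ker θ) :
    ‖((α.coeff 0).1 0 : K)‖ ≤ ‖(p : K)‖ := by
  have hmem : α - WittVector.teichmuller p (α.coeff 0) ∈ Ideal.span {(p : WittVector p _)} := by
    rw [WittVector.mem_span_p_iff_coeff_zero_eq_zero, ← WittVector.constantCoeff_apply, map_sub]
    simp [WittVector.teichmuller_coeff_zero]
  obtain ⟨γ, hγ⟩ := Ideal.mem_span_singleton'.mp hmem
  have hθγ : -((α.coeff 0).1 0 : K) = θ γ * p := by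
    have := congrArg (fun x => (θ x : K)) hγ
    simpa [RingHom.mem_ker.mp hα, hθ] using this.symm
  rw [← norm_neg, hθγ, norm_mul]
  exact mul_le_of_le_one_left (norm_nonneg _) (θ γ).2

theorem IsTiltRing.ker_le_span_sup_mul (hT : IsTiltRing p K) (hp0 : (p : K) ≠ 0)
    (hθ : ∀ z : TiltSeq p K, θ (WittVector.teichmuller p z) = z.1 0)
    {ω : WittVector p (TiltSeq p K)} (hω : ω ∈ RingHom.ker θ)
    (hnorm : ‖(p : K)‖ ≤ ‖((ω.coeff 0).1 0 : K)‖) :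
    RingHom.ker θ ≤ Ideal.span {ω} ⊔ Ideal.span {(p : WittVector p _)} * RingHom.ker θ := by
  intro α hα
  have hω0 : ω.coeff 0 ≠ 0 := fun h0 => by
    rw [h0, hT.coe_zero, norm_zero] at hnorm
    exact hp0 (norm_le_zero_iff.mp hnorm)
  obtain ⟨u, hu⟩ := hT.dvd_of_norm_coe_zero_le hω0
    ((norm_coe_coeff_zero_le_of_mem_ker hθ hα).trans hnorm)
  have hmem : α - ω * WittVector.teichmuller p u ∈ Ideal.span {(p : WittVector p _)} := by
    rw [WittVector.mem_span_p_iff_coeff_zero_eq_zero, ← WittVector.constantCoeff_apply, map_sub,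
      map_mul]
    simp [hu]
  obtain ⟨β, hβ⟩ := Ideal.mem_span_singleton'.mp hmem
  have hβker : β ∈ RingHom.ker θ := by
    have hp0' : (p : integerRing K) ≠ 0 := fun h => hp0 (by simpa using congrArg Subtype.val h)
    have := congrArg θ hβ
    rw [map_sub, map_mul, map_mul, map_natCast, RingHom.mem_ker.mp hα, RingHom.mem_ker.mp hω,
      zero_mul, sub_zero] at this
    exact (mul_eq_zero.mp this).resolve_right hp0'
  refine Submodule.mem_sup.mpr ⟨_, Ideal.mul_mem_right (WittVector.teichmuller p u) _
    (Ideal.mem_span_singleton_self ω), _,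
    Ideal.mul_mem_mul (Ideal.mem_span_singleton_self _) hβker, ?_⟩
  rw [mul_comm _ β, hβ, add_sub_cancel]

end Theta

theorem fontaine_theta_kernel_principal_general
    (p : ℕ) [Fact p.Prime] (hodd : Odd p)
    (K : Type*) [NormedField K]
    [IsUltrametricDist K] [NormedAlgebra ℚ_[p] K]
    (hisom : ∀ x : ℚ_[p], ‖algebraMap ℚ_[p] K x‖ = ‖x‖)
    [instT : CommRing (TiltSeq p K)]
    -- the ring structure on the tilt is coordinatewise multiplication ...
    (hone : ∀ n, ((1 : TiltSeq p K).1 n : K) = 1)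
    (hzero : ∀ n, ((0 : TiltSeq p K).1 n : K) = 0)
    (hmul : ∀ (x y : TiltSeq p K) (n : ℕ), ((x * y).1 n : K) = (x.1 n : K) * (y.1 n : K))
    -- ... and the addition `(x + y)^{(n)} = lim_m (x^{(n+m)} + y^{(n+m)})^{p^m}`
    (hadd : ∀ (x y : TiltSeq p K) (n : ℕ),
      Tendsto (fun m : ℕ => ((x.1 (n + m) + y.1 (n + m)) ^ p ^ m : integerRing K))
        atTop (nhds ((x + y).1 n)))
    -- Fontaine's homomorphism `θ`, determined by `θ([z]) = z^{(0)}`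
    (θ : WittVector p (TiltSeq p K) →+* integerRing K)
    (hθ : ∀ z : TiltSeq p K, θ (WittVector.teichmuller p z) = z.1 0)
    -- a compatible system `ε` of primitive `p`-power roots of unity
    (ε : TiltSeq p K) (hε0 : (ε.1 0 : K) = 1) (hε1 : (ε.1 1 : K) ≠ 1)
    -- `ω = Σ_{i=0}^{p−1} [ε^{1/p}]^i`
    (ω : WittVector p (TiltSeq p K))
    (hω : ω = ∑ i ∈ Finset.range p, (WittVector.teichmuller p (tiltShift p K ε)) ^ i) :
    (WittVector.teichmuller p (tiltShift p K ε) - 1) * ω =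
        WittVector.teichmuller p ε - 1 ∧
      RingHom.ker θ = Ideal.span {ω} := by
  have hT : IsTiltRing p K := ⟨hone, hzero, hmul, hadd⟩
  have hpK : ‖(p : K)‖ = (p : ℝ)⁻¹ := by
    rw [← map_natCast (algebraMap ℚ_[p] K), hisom, Padic.norm_p]
  have hp1 : (1 : ℝ) < p := by exact_mod_cast (Fact.out : p.Prime).one_lt
  have := hT.charP (hpK ▸ inv_lt_one_of_one_lt₀ hp1)
  have := hT.perfectRing
  refine ⟨by rw [hω, mul_geom_sum, ← map_pow, hT.tiltShift_pow], ?_⟩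
  have hθω : ω ∈ RingHom.ker θ := by
    have hζ : IsPrimitiveRoot ((tiltShift p K ε).1 0 : K) (p ^ (0 + 1)) :=
      TiltSeq.isPrimitiveRoot_coe_succ hε0 hε1 0
    rw [zero_add, pow_one] at hζ
    refine RingHom.mem_ker.mpr (Subtype.ext ?_)
    simp only [hω, map_sum, map_pow, hθ]
    push_cast
    exact hζ.geom_sum_eq_zero (mod_cast hp1)
  have hω0 : ω.coeff 0 = (tiltShift p K ε - 1) ^ (p - 1) := by
    rw [← WittVector.constantCoeff_apply, hω, map_sum]
    simp only [map_pow, WittVector.constantCoeff_apply, WittVector.teichmuller_coeff_zero]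
    exact geom_sum_eq_sub_one_pow_of_charP (tiltShift p K ε)
  refine Ideal.eq_span_singleton_of_le_sup_mul hθω (hT.ker_le_span_sup_mul ?_ hθ hθω ?_)
  · exact norm_ne_zero_iff.mp (hpK ▸ by positivity)
  · rw [hω0, hT.coe_pow, norm_pow]
    exact hT.norm_natCast_le_norm_coe_sub_one_pow hodd hε0 hε1

/-- Let `p` be an odd prime and `K = ℂ_p` (an algebraically closed,
complete, nonarchimedean normed field, isometrically extending `ℚ_p`, in which the
elements algebraic over `ℚ_p` are dense), with ring of integers `O`.  Let `Ẽ⁺` be the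
tilt of `O`, a ring under coordinatewise multiplication and the addition
`(x + y)^{(n)} = lim_m (x^{(n+m)} + y^{(n+m)})^{p^m}`, and let
`θ : W(Ẽ⁺) → O` be Fontaine's ring homomorphism, determined by
`θ([z]) = z^{(0)}` on Teichmüller representatives.  If `ε ∈ Ẽ⁺` satisfies `ε^{(0)} = 1`
and `ε^{(1)} ≠ 1`, then `ker θ` is a principal ideal generated by
`ω = ([ε] − 1)/([ε^{1/p}] − 1) = Σ_{i=0}^{p−1} [ε^{1/p}]^i`. -/
theorem fontaine_theta_kernel_principal
    (p : ℕ) [Fact p.Prime] (hodd : Odd p)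
    (K : Type*) [NormedField K] [CompleteSpace K] [IsAlgClosed K]
    [IsUltrametricDist K] [NormedAlgebra ℚ_[p] K]
    (hisom : ∀ x : ℚ_[p], ‖algebraMap ℚ_[p] K x‖ = ‖x‖)
    (hdense : Dense {x : K | IsAlgebraic ℚ_[p] x})
    [instT : CommRing (TiltSeq p K)]
    -- the ring structure on the tilt is coordinatewise multiplication ...
    (hone : ∀ n, ((1 : TiltSeq p K).1 n : K) = 1)
    (hzero : ∀ n, ((0 : TiltSeq p K).1 n : K) = 0)
    (hmul : ∀ (x y : TiltSeq p K) (n : ℕ), ((x * y).1 n : K) = (x.1 n : K) * (y.1 n : K))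
    -- ... and the addition `(x + y)^{(n)} = lim_m (x^{(n+m)} + y^{(n+m)})^{p^m}`
    (hadd : ∀ (x y : TiltSeq p K) (n : ℕ),
      Tendsto (fun m : ℕ => ((x.1 (n + m) + y.1 (n + m)) ^ p ^ m : integerRing K))
        atTop (nhds ((x + y).1 n)))
    -- Fontaine's homomorphism `θ`, determined by `θ([z]) = z^{(0)}`
    (θ : WittVector p (TiltSeq p K) →+* integerRing K)
    (hθ : ∀ z : TiltSeq p K, θ (WittVector.teichmuller p z) = z.1 0)
    -- a compatible system `ε` of primitive `p`-power roots of unity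
    (ε : TiltSeq p K) (hε0 : (ε.1 0 : K) = 1) (hε1 : (ε.1 1 : K) ≠ 1)
    -- `ω = Σ_{i=0}^{p−1} [ε^{1/p}]^i`
    (ω : WittVector p (TiltSeq p K))
    (hω : ω = ∑ i ∈ Finset.range p, (WittVector.teichmuller p (tiltShift p K ε)) ^ i) :
    (WittVector.teichmuller p (tiltShift p K ε) - 1) * ω =
        WittVector.teichmuller p ε - 1 ∧
      RingHom.ker θ = Ideal.span {ω} :=
  fontaine_theta_kernel_principal_general p hodd K hisom (instT := instT) hone hzero hmul hadd θ hθ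
    ε hε0 hε1 ω hω
end
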